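/- Let Σ be an alphabet. A language L ⊆ List Σ is the support of a series realized by a reversible weighted automaton over ZMod 2 with exactly one initial state if and only if L is recognized by a reversible NFA over Σ with exactly one initial state. In symbols: RevL₁(ZMod 2, Σ) = RevL₁(𝔹, Σ). -/

import Mathlib

open Matrix

namespace RevWA

/-- A weighted automaton over a semiring `S` and alphabet `α`, given by a linear
representation: number of states `n`, initial weight vector, transition matrices,
and final weight vector. -/
structure WA (S : Type) [Semiring S] (α : Type) where
  n : ℕ
  init : Fin n → S
  trans : α → Matrix (Fin n) (Fin n) S
  final : Fin n → S

variable {S : Type} [Semiring S] {α : Type}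

/-- The matrix associated to a word: product of the transition matrices of its letters. -/
def WA.matWord (A : WA S α) (w : List α) : Matrix (Fin A.n) (Fin A.n) S :=
  (w.map A.trans).prod

/-- The series realized by a weighted automaton: `i ⬝ μ(w) ⬝ f`. -/
def WA.series (A : WA S α) : List α → S :=
  fun w => A.init ⬝ᵥ (A.matWord w).mulVec A.final

/-- A matrix has at most one nonzero entry in each row. -/
def rowOk {n : ℕ} (M : Matrix (Fin n) (Fin n) S) : Prop :=
  ∀ i j j', M i j ≠ 0 → M i j' ≠ 0 → j = j'

/-- A matrix has at most one nonzero entry in each column. -/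
def colOk {n : ℕ} (M : Matrix (Fin n) (Fin n) S) : Prop :=
  ∀ i i' j, M i j ≠ 0 → M i' j ≠ 0 → i = i'

/-- A weighted automaton is reversible if each transition matrix has at most one
nonzero entry in each row and at most one nonzero entry in each column. -/
def WA.Reversible (A : WA S α) : Prop :=
  ∀ a : α, rowOk (A.trans a) ∧ colOk (A.trans a)

/-- A weighted automaton has exactly one initial state. -/
def WA.OneInitial (A : WA S α) : Prop :=
  ∃! q : Fin A.n, A.init q ≠ 0

/-- `Rev S α`: series realized by reversible weighted automata over `S` and `α`. -/
def Rev (S : Type) [Semiring S] (α : Type) : Set (List α → S) :=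
  {r | ∃ A : WA S α, A.Reversible ∧ A.series = r}

/-- `Rev₁ S α`: series realized by reversible weighted automata over `S` and `α`
with exactly one initial state. -/
def Rev1 (S : Type) [Semiring S] (α : Type) : Set (List α → S) :=
  {r | ∃ A : WA S α, A.Reversible ∧ A.OneInitial ∧ A.series = r}

/-- The support of a series. -/
def supp (r : List α → S) : Set (List α) :=
  {w | r w ≠ 0}

/-- `RevL S α`: supports of series realized by reversible weighted automata. -/
def RevL (S : Type) [Semiring S] (α : Type) : Set (Set (List α)) :=
  {L | ∃ r ∈ Rev S α, supp r = L}

/-- `RevL₁ S α`: supports of series realized by reversible weighted automata with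
exactly one initial state. -/
def RevL1 (S : Type) [Semiring S] (α : Type) : Set (Set (List α)) :=
  {L | ∃ r ∈ Rev1 S α, supp r = L}

/-- The characteristic series of a language `L` over `S`. -/
noncomputable def charSeries (S : Type) [Semiring S] {α : Type} (L : Set (List α)) :
    List α → S :=
  L.indicator 1

/-- A reversible nondeterministic finite automaton: deterministic and
codeterministic transition relation. -/
structure RevNFA (α : Type) where
  Q : Type
  fintypeQ : Fintype Q
  δ : Q → α → Q → Prop
  I : Set Q
  F : Set Q
  det : ∀ p a q q', δ p a q → δ p a q' → q = q'
  codet : ∀ p p' a q, δ p a q → δ p' a q → p = p'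

/-- Paths in a reversible NFA. -/
inductive RevNFA.Path {α : Type} (A : RevNFA α) : A.Q → List α → A.Q → Prop
  | nil (q : A.Q) : RevNFA.Path A q [] q
  | cons {p q r : A.Q} {a : α} {w : List α} :
      A.δ p a q → RevNFA.Path A q w r → RevNFA.Path A p (a :: w) r

/-- The language recognized by a reversible NFA. -/
def RevNFA.lang {α : Type} (A : RevNFA α) : Set (List α) :=
  {w | ∃ p ∈ A.I, ∃ q ∈ A.F, A.Path p w q}

/-- A reversible NFA has exactly one initial state. -/
def RevNFA.OneInitial {α : Type} (A : RevNFA α) : Prop :=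
  ∃ q : A.Q, A.I = {q}

/-- `RevL(𝔹,α)`: languages recognized by reversible NFAs. -/
def RevLB (α : Type) : Set (Set (List α)) :=
  {L | ∃ A : RevNFA α, A.lang = L}

/-- `RevL₁(𝔹,α)`: languages recognized by reversible NFAs with exactly one
initial state. -/
def RevL1B (α : Type) : Set (Set (List α)) :=
  {L | ∃ A : RevNFA α, A.OneInitial ∧ A.lang = L}

end RevWA

/-!
Over a semiring without zero divisors, a product of matrices with at most one nonzero entry
per row again has at most one nonzero entry per row, and `(M * N) p q ≠ 0` iff some
`M p k * N k q ≠ 0`: no cancellation can occur. Hence `μ(w) p q ≠ 0` iff `w` labels a path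
from `p` to `q` in the NFA whose transitions are the nonzero entries of the `μ(a)`, and with a
single initial state `q₀` the value `‖A‖(w)` is a single product, nonzero iff the path from
`q₀` ends in a state of nonzero final weight. Conversely a reversible NFA is read as an automaton
with 0/1 weights.
-/

namespace RevWA

variable {S : Type} [Semiring S] {α : Type}

theorem sum_mul_ne_zero_iff [NoZeroDivisors S] {ι : Type*} [Fintype ι] {u v : ι → S}
    (hu : ∀ j j', u j ≠ 0 → u j' ≠ 0 → j = j') :
    ∑ j, u j * v j ≠ 0 ↔ ∃ j, u j ≠ 0 ∧ v j ≠ 0 := by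
  constructor
  · intro hs
    obtain ⟨j, -, hj⟩ := Finset.exists_ne_zero_of_sum_ne_zero hs
    exact ⟨j, left_ne_zero_of_mul hj, right_ne_zero_of_mul hj⟩
  · rintro ⟨j, huj, hvj⟩
    rw [Finset.sum_eq_single j _ (by simp)]
    · exact mul_ne_zero huj hvj
    · intro k _ hkj
      have : u k = 0 := by_contra fun huk => hkj (hu k j huk huj)
      rw [this, zero_mul]

section Matrix

variable {n : ℕ} {M N : Matrix (Fin n) (Fin n) S}

theorem mul_apply_ne_zero_iff [NoZeroDivisors S] (hM : rowOk M) (p q : Fin n) :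
    (M * N) p q ≠ 0 ↔ ∃ k, M p k ≠ 0 ∧ N k q ≠ 0 := by
  rw [Matrix.mul_apply]
  exact sum_mul_ne_zero_iff (hM p)

theorem rowOk_one : rowOk (1 : Matrix (Fin n) (Fin n) S) := by
  intro i j j' h h'
  obtain rfl : i = j := by_contra fun hij => h (Matrix.one_apply_ne hij)
  exact by_contra fun hij' => h' (Matrix.one_apply_ne hij')

theorem rowOk_mul (hM : rowOk M) (hN : rowOk N) : rowOk (M * N) := by
  intro i j j' h h'
  rw [Matrix.mul_apply] at h h'
  obtain ⟨k, -, hk⟩ := Finset.exists_ne_zero_of_sum_ne_zero h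
  obtain ⟨k', -, hk'⟩ := Finset.exists_ne_zero_of_sum_ne_zero h'
  obtain rfl := hM i k k' (left_ne_zero_of_mul hk) (left_ne_zero_of_mul hk')
  exact hN k j j' (right_ne_zero_of_mul hk) (right_ne_zero_of_mul hk')

end Matrix

namespace WA

@[simp]
theorem matWord_nil (A : WA S α) : A.matWord [] = 1 := rfl

@[simp]
theorem matWord_cons (A : WA S α) (a : α) (w : List α) :
    A.matWord (a :: w) = A.trans a * A.matWord w := rfl

theorem rowOk_matWord (A : WA S α) (hA : ∀ a, rowOk (A.trans a)) (w : List α) :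
    rowOk (A.matWord w) := by
  induction w with
  | nil => exact rowOk_one
  | cons a w ih => exact rowOk_mul (hA a) ih

theorem series_ne_zero_iff [NoZeroDivisors S] (A : WA S α) (hA : ∀ a, rowOk (A.trans a))
    {q₀ : Fin A.n} (hinit : ∀ q, A.init q ≠ 0 ↔ q = q₀) (w : List α) :
    A.series w ≠ 0 ↔ ∃ q, A.matWord w q₀ q ≠ 0 ∧ A.final q ≠ 0 := by
  have hsingle : ∀ j j', A.init j ≠ 0 → A.init j' ≠ 0 → j = j' := fun j j' hj hj' =>
    ((hinit j).1 hj).trans ((hinit j').1 hj').symm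
  rw [series, dotProduct, sum_mul_ne_zero_iff hsingle]
  simp only [hinit, exists_eq_left, Matrix.mulVec, dotProduct]
  exact sum_mul_ne_zero_iff (A.rowOk_matWord hA w q₀)

end WA

namespace RevNFA

instance (B : RevNFA α) : Fintype B.Q := B.fintypeQ

theorem path_nil_iff (B : RevNFA α) {p q : B.Q} : B.Path p [] q ↔ p = q := by
  constructor
  · rintro ⟨⟩
    rfl
  · rintro rfl
    exact .nil p

theorem path_cons_iff (B : RevNFA α) {p q : B.Q} {a : α} {w : List α} :
    B.Path p (a :: w) q ↔ ∃ r, B.δ p a r ∧ B.Path r w q := by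
  constructor
  · rintro (_ | ⟨hpr, hrq⟩)
    exact ⟨_, hpr, hrq⟩
  · rintro ⟨r, hpr, hrq⟩
    exact .cons hpr hrq

end RevNFA

section Simulation

variable [NoZeroDivisors S] [Nontrivial S] (A : WA S α) (hA : ∀ a, rowOk (A.trans a))
  (B : RevNFA α) (e : Fin A.n ≃ B.Q) (hδ : ∀ p a q, B.δ (e p) a (e q) ↔ A.trans a p q ≠ 0)
include hA hδ

theorem matWord_ne_zero_iff_path (w : List α) (p q : Fin A.n) :
    A.matWord w p q ≠ 0 ↔ B.Path (e p) w (e q) := by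
  induction w generalizing p with
  | nil => simp [Matrix.one_apply, B.path_nil_iff]
  | cons a w ih =>
    rw [WA.matWord_cons, mul_apply_ne_zero_iff (hA a), B.path_cons_iff, e.surjective.exists]
    simp only [hδ, ih]

theorem supp_series_eq_lang {q₀ : Fin A.n} (hinit : ∀ q, A.init q ≠ 0 ↔ q = q₀)
    (hI : B.I = {e q₀}) (hF : ∀ q, e q ∈ B.F ↔ A.final q ≠ 0) :
    supp A.series = B.lang := by
  ext w
  simp only [supp, RevNFA.lang, Set.mem_ofPred_eq, A.series_ne_zero_iff hA hinit, hI,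
    Set.mem_singleton_iff, e.surjective.exists, e.injective.eq_iff, exists_eq_left, hF,
    matWord_ne_zero_iff_path A hA B e hδ, and_comm]

end Simulation

def WA.toRevNFA (A : WA S α) (hA : A.Reversible) : RevNFA α where
  Q := Fin A.n
  fintypeQ := inferInstance
  δ p a q := A.trans a p q ≠ 0
  I := {q | A.init q ≠ 0}
  F := {q | A.final q ≠ 0}
  det p a q q' := (hA a).1 p q q'
  codet p p' a q := (hA a).2 p p' q

theorem WA.lang_toRevNFA [NoZeroDivisors S] [Nontrivial S] (A : WA S α) (hA : A.Reversible)
    (h₁ : A.OneInitial) : (A.toRevNFA hA).lang = supp A.series := by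
  obtain ⟨q₀, hq₀, huniq⟩ := h₁
  have hinit : ∀ q, A.init q ≠ 0 ↔ q = q₀ := fun q => ⟨huniq q, fun h => h ▸ hq₀⟩
  refine (supp_series_eq_lang A (fun a => (hA a).1) (A.toRevNFA hA) (Equiv.refl _)
    (fun _ _ _ => Iff.rfl) hinit ?_ fun _ => Iff.rfl).symm
  ext q
  exact hinit q

theorem WA.toRevNFA_oneInitial (A : WA S α) (hA : A.Reversible) (h₁ : A.OneInitial) :
    (A.toRevNFA hA).OneInitial := by
  obtain ⟨q₀, hq₀, huniq⟩ := h₁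
  exact ⟨q₀, Set.ext fun q => ⟨huniq q, fun h => h ▸ hq₀⟩⟩

namespace RevNFA

noncomputable def stateEquiv (B : RevNFA α) : Fin (Fintype.card B.Q) ≃ B.Q :=
  (Fintype.equivFin B.Q).symm

variable (S) in
open Classical in
noncomputable def toWA (B : RevNFA α) : WA S α where
  n := Fintype.card B.Q
  init i := if B.stateEquiv i ∈ B.I then 1 else 0
  trans a i j := if B.δ (B.stateEquiv i) a (B.stateEquiv j) then 1 else 0
  final i := if B.stateEquiv i ∈ B.F then 1 else 0

variable [Nontrivial S] (B : RevNFA α)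

theorem toWA_trans_ne_zero_iff (a : α) (i j : Fin (Fintype.card B.Q)) :
    (B.toWA S).trans a i j ≠ 0 ↔ B.δ (B.stateEquiv i) a (B.stateEquiv j) := by
  simp [toWA]

theorem toWA_init_ne_zero_iff (i : Fin (Fintype.card B.Q)) :
    (B.toWA S).init i ≠ 0 ↔ B.stateEquiv i ∈ B.I := by
  simp [toWA]

theorem toWA_final_ne_zero_iff (i : Fin (Fintype.card B.Q)) :
    (B.toWA S).final i ≠ 0 ↔ B.stateEquiv i ∈ B.F := by
  simp [toWA]

theorem toWA_reversible : (B.toWA S).Reversible := by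
  intro a
  constructor
  · intro i j j' h h'
    exact B.stateEquiv.injective (B.det _ a _ _ ((B.toWA_trans_ne_zero_iff a i j).1 h)
      ((B.toWA_trans_ne_zero_iff a i j').1 h'))
  · intro i i' j h h'
    exact B.stateEquiv.injective (B.codet _ _ a _ ((B.toWA_trans_ne_zero_iff a i j).1 h)
      ((B.toWA_trans_ne_zero_iff a i' j).1 h'))

theorem toWA_init_ne_zero_iff_eq {s₀ : B.Q} (hI : B.I = {s₀}) (i : Fin (Fintype.card B.Q)) :
    (B.toWA S).init i ≠ 0 ↔ i = B.stateEquiv.symm s₀ := by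
  rw [toWA_init_ne_zero_iff, hI, Set.mem_singleton_iff, Equiv.eq_symm_apply]

theorem toWA_oneInitial (hB : B.OneInitial) : (B.toWA S).OneInitial := by
  obtain ⟨s₀, hI⟩ := hB
  exact ⟨_, (B.toWA_init_ne_zero_iff_eq hI _).2 rfl, fun i => (B.toWA_init_ne_zero_iff_eq hI i).1⟩

theorem supp_toWA_series [NoZeroDivisors S] (hB : B.OneInitial) :
    supp (B.toWA S).series = B.lang := by
  obtain ⟨s₀, hI⟩ := hB
  refine supp_series_eq_lang (B.toWA S) (fun a => (B.toWA_reversible a).1) B B.stateEquiv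
    (fun i a j => (B.toWA_trans_ne_zero_iff a i j).symm) (B.toWA_init_ne_zero_iff_eq hI) ?_
    fun i => (B.toWA_final_ne_zero_iff i).symm
  rw [hI]
  exact congrArg _ (B.stateEquiv.apply_symm_apply s₀).symm

end RevNFA

variable (S α) in
theorem RevL1_eq_RevL1B [NoZeroDivisors S] [Nontrivial S] : RevL1 S α = RevL1B α := by
  ext L
  constructor
  · rintro ⟨_, ⟨A, hA, h₁, rfl⟩, rfl⟩
    exact ⟨A.toRevNFA hA, A.toRevNFA_oneInitial hA h₁, A.lang_toRevNFA hA h₁⟩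
  · rintro ⟨B, hB, rfl⟩
    exact ⟨_, ⟨B.toWA S, B.toWA_reversible, B.toWA_oneInitial hB, rfl⟩, B.supp_toWA_series hB⟩

end RevWA

open RevWA in
theorem stmt4_general (α : Type) :
    RevL1 (ZMod 2) α = RevL1B α :=
  RevL1_eq_RevL1B (ZMod 2) α

open RevWA in
theorem stmt4 (α : Type) [Fintype α] [Nonempty α] :
    RevL1 (ZMod 2) α = RevL1B α :=
  stmt4_general α
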